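/- Determinativeness (FEL): for every *-term P, fe(P) can be decomposed as X[□↦Y] with X ∈ 𝒯_□ and Y ∈ 𝒯 such that X contains □ (possibly X = □) and Y = fe(Q) for some ℓ-term Q. -/
import Mathlib


/-! Shared definitions for left-sequential logics (FEL and SCL),
    evaluation trees, and decompositions. -/

/-- FEL-terms over atoms `A` (`and` = full left-sequential conjunction `∧•`,
    `or` = full left-sequential disjunction `∨•`). -/
inductive FTerm (A : Type) : Type
  | atom : A → FTerm A
  | tru  : FTerm A
  | fls  : FTerm A
  | neg  : FTerm A → FTerm A
  | and  : FTerm A → FTerm A → FTerm A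
  | or   : FTerm A → FTerm A → FTerm A

/-- SCL-terms over atoms `A` (`and` = short-circuit conjunction `∧◦`,
    `or` = short-circuit disjunction `∨◦`). -/
inductive STerm (A : Type) : Type
  | atom : A → STerm A
  | tru  : STerm A
  | fls  : STerm A
  | neg  : STerm A → STerm A
  | and  : STerm A → STerm A → STerm A
  | or   : STerm A → STerm A → STerm A

/-- Evaluation trees: finite binary trees over `A` with leaves `T`, `F`. -/
inductive ETree (A : Type) : Type
  | tru  : ETree A
  | fls  : ETree A
  | node : ETree A → A → ETree A → ETree A

namespace ETree

/-- `X.subst Y Z = X[T↦Y, F↦Z]`. -/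
def subst {A : Type} : ETree A → ETree A → ETree A → ETree A
  | .tru, y, _ => y
  | .fls, _, z => z
  | .node l a r, y, z => .node (subst l y z) a (subst r y z)

def hasTru {A : Type} : ETree A → Prop
  | .tru => True
  | .fls => False
  | .node l _ r => hasTru l ∨ hasTru r

def hasFls {A : Type} : ETree A → Prop
  | .tru => False
  | .fls => True
  | .node l _ r => hasFls l ∨ hasFls r

def depth {A : Type} : ETree A → ℕ
  | .tru => 0
  | .fls => 0
  | .node l _ r => 1 + max (depth l) (depth r)

end ETree

/-- The full evaluation function `fe : FTerm → 𝒯`. -/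
def fe {A : Type} : FTerm A → ETree A
  | FTerm.tru => ETree.tru
  | FTerm.fls => ETree.fls
  | FTerm.atom a => ETree.node ETree.tru a ETree.fls
  | FTerm.neg p => (fe p).subst ETree.fls ETree.tru
  | FTerm.and p q => (fe p).subst (fe q) ((fe q).subst ETree.fls ETree.fls)
  | FTerm.or p q => (fe p).subst ((fe q).subst ETree.tru ETree.tru) (fe q)

/-- The short-circuit evaluation function `se : STerm → 𝒯`. -/
def se {A : Type} : STerm A → ETree A
  | STerm.tru => ETree.tru
  | STerm.fls => ETree.fls
  | STerm.atom a => ETree.node ETree.tru a ETree.fls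
  | STerm.neg p => (se p).subst ETree.fls ETree.tru
  | STerm.and p q => (se p).subst (se q) ETree.fls
  | STerm.or p q => (se p).subst ETree.tru (se q)

/-- Derivability from EqFFEL by equational logic. -/
inductive EqFFEL {A : Type} : FTerm A → FTerm A → Prop
  | refl (p : FTerm A) : EqFFEL p p
  | symm {p q : FTerm A} : EqFFEL p q → EqFFEL q p
  | trans {p q r : FTerm A} : EqFFEL p q → EqFFEL q r → EqFFEL p r
  | neg_congr {p q : FTerm A} : EqFFEL p q → EqFFEL (FTerm.neg p) (FTerm.neg q)
  | and_congr {p p' q q' : FTerm A} :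
      EqFFEL p p' → EqFFEL q q' → EqFFEL (FTerm.and p q) (FTerm.and p' q')
  | or_congr {p p' q q' : FTerm A} :
      EqFFEL p p' → EqFFEL q q' → EqFFEL (FTerm.or p q) (FTerm.or p' q')
  | fel1 : EqFFEL FTerm.fls (FTerm.neg FTerm.tru)
  | fel2 (x y : FTerm A) : EqFFEL (FTerm.or x y) (FTerm.neg (FTerm.and (FTerm.neg x) (FTerm.neg y)))
  | fel3 (x : FTerm A) : EqFFEL (FTerm.neg (FTerm.neg x)) x
  | fel4 (x y z : FTerm A) : EqFFEL (FTerm.and (FTerm.and x y) z) (FTerm.and x (FTerm.and y z))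
  | fel5 (x : FTerm A) : EqFFEL (FTerm.and FTerm.tru x) x
  | fel6 (x : FTerm A) : EqFFEL (FTerm.and x FTerm.tru) x
  | fel7 (x : FTerm A) : EqFFEL (FTerm.and x FTerm.fls) (FTerm.and FTerm.fls x)
  | fel8 (x : FTerm A) : EqFFEL (FTerm.and x FTerm.fls) (FTerm.and (FTerm.neg x) FTerm.fls)
  | fel9 (x y : FTerm A) :
      EqFFEL (FTerm.or (FTerm.and x FTerm.fls) y) (FTerm.and (FTerm.or x FTerm.tru) y)
  | fel10 (x y : FTerm A) :
      EqFFEL (FTerm.or x (FTerm.and y FTerm.fls)) (FTerm.and x (FTerm.or y FTerm.tru))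

/-- Derivability from EqFSCL by equational logic. -/
inductive EqFSCL {A : Type} : STerm A → STerm A → Prop
  | refl (p : STerm A) : EqFSCL p p
  | symm {p q : STerm A} : EqFSCL p q → EqFSCL q p
  | trans {p q r : STerm A} : EqFSCL p q → EqFSCL q r → EqFSCL p r
  | neg_congr {p q : STerm A} : EqFSCL p q → EqFSCL (STerm.neg p) (STerm.neg q)
  | and_congr {p p' q q' : STerm A} :
      EqFSCL p p' → EqFSCL q q' → EqFSCL (STerm.and p q) (STerm.and p' q')
  | or_congr {p p' q q' : STerm A} :
      EqFSCL p p' → EqFSCL q q' → EqFSCL (STerm.or p q) (STerm.or p' q')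
  | scl1 : EqFSCL STerm.fls (STerm.neg STerm.tru)
  | scl2 (x y : STerm A) : EqFSCL (STerm.or x y) (STerm.neg (STerm.and (STerm.neg x) (STerm.neg y)))
  | scl3 (x : STerm A) : EqFSCL (STerm.neg (STerm.neg x)) x
  | scl4 (x y z : STerm A) : EqFSCL (STerm.and (STerm.and x y) z) (STerm.and x (STerm.and y z))
  | scl5 (x : STerm A) : EqFSCL (STerm.and STerm.tru x) x
  | scl6 (x : STerm A) : EqFSCL (STerm.and x STerm.tru) x
  | scl7 (x : STerm A) : EqFSCL (STerm.and STerm.fls x) STerm.fls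
  | scl8 (x : STerm A) : EqFSCL (STerm.and x STerm.fls) (STerm.and (STerm.neg x) STerm.fls)
  | scl9 (x y : STerm A) :
      EqFSCL (STerm.or (STerm.and x STerm.fls) y) (STerm.and (STerm.or x STerm.tru) y)
  | scl10 (x y z : STerm A) :
      EqFSCL (STerm.or (STerm.and x y) (STerm.and z STerm.fls))
             (STerm.and (STerm.or x (STerm.and z STerm.fls)) (STerm.or y (STerm.and z STerm.fls)))

/-! ### FEL Normal Form grammar -/

/-- T-terms: `P^T ::= T | a ∨• P^T`. -/
inductive IsFT_T {A : Type} : FTerm A → Prop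
  | tru : IsFT_T FTerm.tru
  | or (a : A) {p : FTerm A} : IsFT_T p → IsFT_T (FTerm.or (FTerm.atom a) p)

/-- F-terms: `P^F ::= F | a ∧• P^F`. -/
inductive IsFT_F {A : Type} : FTerm A → Prop
  | fls : IsFT_F FTerm.fls
  | and (a : A) {p : FTerm A} : IsFT_F p → IsFT_F (FTerm.and (FTerm.atom a) p)

/-- ℓ-terms: `P^ℓ ::= a ∧• P^T | ¬a ∧• P^T`. -/
inductive IsFT_L {A : Type} : FTerm A → Prop
  | pos (a : A) {p : FTerm A} : IsFT_T p → IsFT_L (FTerm.and (FTerm.atom a) p)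
  | neg (a : A) {p : FTerm A} : IsFT_T p → IsFT_L (FTerm.and (FTerm.neg (FTerm.atom a)) p)

mutual
/-- `P^c ::= P^ℓ | P^* ∧• P^d`. -/
inductive IsFT_C {A : Type} : FTerm A → Prop
  | ell {p : FTerm A} : IsFT_L p → IsFT_C p
  | and {p q : FTerm A} : IsFT_Star p → IsFT_D q → IsFT_C (FTerm.and p q)
/-- `P^d ::= P^ℓ | P^* ∨• P^c`. -/
inductive IsFT_D {A : Type} : FTerm A → Prop
  | ell {p : FTerm A} : IsFT_L p → IsFT_D p
  | or {p q : FTerm A} : IsFT_Star p → IsFT_C q → IsFT_D (FTerm.or p q)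
/-- `P^* ::= P^c | P^d`. -/
inductive IsFT_Star {A : Type} : FTerm A → Prop
  | c {p : FTerm A} : IsFT_C p → IsFT_Star p
  | d {p : FTerm A} : IsFT_D p → IsFT_Star p
end

/-- FEL Normal Form: `P ::= P^T | P^F | P^T ∧• P^*`. -/
inductive IsFNF {A : Type} : FTerm A → Prop
  | t {p : FTerm A} : IsFT_T p → IsFNF p
  | f {p : FTerm A} : IsFT_F p → IsFNF p
  | ts {p q : FTerm A} : IsFT_T p → IsFT_Star q → IsFNF (FTerm.and p q)

/-! ### SCL Normal Form grammar -/

/-- T-terms: `P^T ::= T | (a ∧◦ P^T) ∨◦ P^T`. -/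
inductive IsST_T {A : Type} : STerm A → Prop
  | tru : IsST_T STerm.tru
  | or (a : A) {p q : STerm A} :
      IsST_T p → IsST_T q → IsST_T (STerm.or (STerm.and (STerm.atom a) p) q)

/-- F-terms: `P^F ::= F | (a ∨◦ P^F) ∧◦ P^F`. -/
inductive IsST_F {A : Type} : STerm A → Prop
  | fls : IsST_F STerm.fls
  | and (a : A) {p q : STerm A} :
      IsST_F p → IsST_F q → IsST_F (STerm.and (STerm.or (STerm.atom a) p) q)

/-- ℓ-terms: `P^ℓ ::= (a ∧◦ P^T) ∨◦ P^F | (¬a ∧◦ P^T) ∨◦ P^F`. -/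
inductive IsST_L {A : Type} : STerm A → Prop
  | pos (a : A) {p q : STerm A} :
      IsST_T p → IsST_F q → IsST_L (STerm.or (STerm.and (STerm.atom a) p) q)
  | neg (a : A) {p q : STerm A} :
      IsST_T p → IsST_F q → IsST_L (STerm.or (STerm.and (STerm.neg (STerm.atom a)) p) q)

mutual
/-- `P^c ::= P^ℓ | P^* ∧◦ P^d`. -/
inductive IsST_C {A : Type} : STerm A → Prop
  | ell {p : STerm A} : IsST_L p → IsST_C p
  | and {p q : STerm A} : IsST_Star p → IsST_D q → IsST_C (STerm.and p q)
/-- `P^d ::= P^ℓ | P^* ∨◦ P^c`. -/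
inductive IsST_D {A : Type} : STerm A → Prop
  | ell {p : STerm A} : IsST_L p → IsST_D p
  | or {p q : STerm A} : IsST_Star p → IsST_C q → IsST_D (STerm.or p q)
/-- `P^* ::= P^c | P^d`. -/
inductive IsST_Star {A : Type} : STerm A → Prop
  | c {p : STerm A} : IsST_C p → IsST_Star p
  | d {p : STerm A} : IsST_D p → IsST_Star p
end

/-- SCL Normal Form: `P ::= P^T | P^F | P^T ∧◦ P^*`. -/
inductive IsSNF {A : Type} : STerm A → Prop
  | t {p : STerm A} : IsST_T p → IsSNF p
  | f {p : STerm A} : IsST_F p → IsSNF p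
  | ts {p q : STerm A} : IsST_T p → IsST_Star q → IsSNF (STerm.and p q)

/-! ### Trees with box leaves -/

/-- `𝒯_□`: trees over `A` with leaves in `{T, F, □}`. -/
inductive ETreeB (A : Type) : Type
  | tru  : ETreeB A
  | fls  : ETreeB A
  | box  : ETreeB A
  | node : ETreeB A → A → ETreeB A → ETreeB A

namespace ETreeB

/-- `X.substBox Y = X[□↦Y]`. -/
def substBox {A : Type} : ETreeB A → ETree A → ETree A
  | .tru, _ => ETree.tru
  | .fls, _ => ETree.fls
  | .box, y => y
  | .node l a r, y => ETree.node (substBox l y) a (substBox r y)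

def hasBox {A : Type} : ETreeB A → Prop
  | .tru => False
  | .fls => False
  | .box => True
  | .node l _ r => hasBox l ∨ hasBox r

def hasTru {A : Type} : ETreeB A → Prop
  | .tru => True
  | .fls => False
  | .box => False
  | .node l _ r => hasTru l ∨ hasTru r

def hasFls {A : Type} : ETreeB A → Prop
  | .tru => False
  | .fls => True
  | .box => False
  | .node l _ r => hasFls l ∨ hasFls r

end ETreeB

/-- `𝒯_{1,2}`: trees over `A` with leaves in `{T, F, □₁, □₂}`. -/
inductive ETree2 (A : Type) : Type
  | tru  : ETree2 A
  | fls  : ETree2 A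
  | box1 : ETree2 A
  | box2 : ETree2 A
  | node : ETree2 A → A → ETree2 A → ETree2 A

namespace ETree2

/-- `X.substBoxes Y Z = X[□₁↦Y, □₂↦Z]`. -/
def substBoxes {A : Type} : ETree2 A → ETree A → ETree A → ETree A
  | .tru, _, _ => ETree.tru
  | .fls, _, _ => ETree.fls
  | .box1, y, _ => y
  | .box2, _, z => z
  | .node l a r, y, z => ETree.node (substBoxes l y z) a (substBoxes r y z)

def hasBox1 {A : Type} : ETree2 A → Prop
  | .tru => False
  | .fls => False
  | .box1 => True
  | .box2 => False
  | .node l _ r => hasBox1 l ∨ hasBox1 r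

def hasBox2 {A : Type} : ETree2 A → Prop
  | .tru => False
  | .fls => False
  | .box1 => False
  | .box2 => True
  | .node l _ r => hasBox2 l ∨ hasBox2 r

def hasTru {A : Type} : ETree2 A → Prop
  | .tru => True
  | .fls => False
  | .box1 => False
  | .box2 => False
  | .node l _ r => hasTru l ∨ hasTru r

def hasFls {A : Type} : ETree2 A → Prop
  | .tru => False
  | .fls => True
  | .box1 => False
  | .box2 => False
  | .node l _ r => hasFls l ∨ hasFls r

end ETree2

namespace ETree

/-- `X[T↦□₁, F↦□₂]`. -/
def toBoxes {A : Type} : ETree A → ETree2 A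
  | .tru => ETree2.box1
  | .fls => ETree2.box2
  | .node l a r => ETree2.node (toBoxes l) a (toBoxes r)

/-- `X[T↦□]`. -/
def truToBox {A : Type} : ETree A → ETreeB A
  | .tru => ETreeB.box
  | .fls => ETreeB.fls
  | .node l a r => ETreeB.node (truToBox l) a (truToBox r)

/-- `X[F↦□]`. -/
def flsToBox {A : Type} : ETree A → ETreeB A
  | .tru => ETreeB.tru
  | .fls => ETreeB.box
  | .node l a r => ETreeB.node (flsToBox l) a (flsToBox r)

end ETree

/-! ### FEL decompositions -/

/-- Candidate conjunction decomposition (FEL):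
    `X = Y[□₁↦Z, □₂↦Z[T↦F]]`, `Y` contains both boxes, neither `T` nor `F`,
    and `Z` contains both `T` and `F`. -/
def IsCcdF {A : Type} (X : ETree A) (Y : ETree2 A) (Z : ETree A) : Prop :=
  X = Y.substBoxes Z (Z.subst ETree.fls ETree.fls) ∧
  Y.hasBox1 ∧ Y.hasBox2 ∧ ¬ Y.hasTru ∧ ¬ Y.hasFls ∧ Z.hasTru ∧ Z.hasFls

/-- Candidate disjunction decomposition (FEL):
    `X = Y[□₁↦Z[F↦T], □₂↦Z]` with the same side conditions. -/
def IsCddF {A : Type} (X : ETree A) (Y : ETree2 A) (Z : ETree A) : Prop :=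
  X = Y.substBoxes (Z.subst ETree.tru ETree.tru) Z ∧
  Y.hasBox1 ∧ Y.hasBox2 ∧ ¬ Y.hasTru ∧ ¬ Y.hasFls ∧ Z.hasTru ∧ Z.hasFls

/-- Conjunction decomposition (FEL): a ccd with `Z` of minimal depth. -/
def IsCdF {A : Type} (X : ETree A) (Y : ETree2 A) (Z : ETree A) : Prop :=
  IsCcdF X Y Z ∧ ∀ (Y' : ETree2 A) (Z' : ETree A), IsCcdF X Y' Z' → Z.depth ≤ Z'.depth

/-- Disjunction decomposition (FEL): a cdd with `Z` of minimal depth. -/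
def IsDdF {A : Type} (X : ETree A) (Y : ETree2 A) (Z : ETree A) : Prop :=
  IsCddF X Y Z ∧ ∀ (Y' : ETree2 A) (Z' : ETree A), IsCddF X Y' Z' → Z.depth ≤ Z'.depth

/-- T-*-decomposition (FEL): `X = Y[□↦Z]`, `Y` contains neither `T` nor `F`,
    and `Z` admits no nontrivial box decomposition. -/
def IsTsdF {A : Type} (X : ETree A) (Y : ETreeB A) (Z : ETree A) : Prop :=
  X = Y.substBox Z ∧ ¬ Y.hasTru ∧ ¬ Y.hasFls ∧
  ¬ ∃ (U : ETreeB A) (V : ETree A),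
      Z = U.substBox V ∧ U.hasBox ∧ U ≠ ETreeB.box ∧ ¬ U.hasTru ∧ ¬ U.hasFls

/-! ### SCL decompositions -/

/-- Candidate conjunction decomposition (SCL): `X = Y[□↦Z]`, `Y` contains `□`,
    `Y` contains `F` but not `T`, and `Z` contains both `T` and `F`. -/
def IsCcdS {A : Type} (X : ETree A) (Y : ETreeB A) (Z : ETree A) : Prop :=
  X = Y.substBox Z ∧ Y.hasBox ∧ Y.hasFls ∧ ¬ Y.hasTru ∧ Z.hasTru ∧ Z.hasFls

/-- Candidate disjunction decomposition (SCL): `X = Y[□↦Z]`, `Y` contains `□`,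
    `Y` contains `T` but not `F`, and `Z` contains both `T` and `F`. -/
def IsCddS {A : Type} (X : ETree A) (Y : ETreeB A) (Z : ETree A) : Prop :=
  X = Y.substBox Z ∧ Y.hasBox ∧ Y.hasTru ∧ ¬ Y.hasFls ∧ Z.hasTru ∧ Z.hasFls

/-- Conjunction decomposition (SCL): a ccd with `Z` of minimal depth. -/
def IsCdS {A : Type} (X : ETree A) (Y : ETreeB A) (Z : ETree A) : Prop :=
  IsCcdS X Y Z ∧ ∀ (Y' : ETreeB A) (Z' : ETree A), IsCcdS X Y' Z' → Z.depth ≤ Z'.depth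

/-- Disjunction decomposition (SCL): a cdd with `Z` of minimal depth. -/
def IsDdS {A : Type} (X : ETree A) (Y : ETreeB A) (Z : ETree A) : Prop :=
  IsCddS X Y Z ∧ ∀ (Y' : ETreeB A) (Z' : ETree A), IsCddS X Y' Z' → Z.depth ≤ Z'.depth

/-- Candidate T-*-decomposition (SCL). -/
def IsCtsdS {A : Type} (X : ETree A) (Y : ETreeB A) (Z : ETree A) : Prop :=
  X = Y.substBox Z ∧ ¬ Y.hasTru ∧ ¬ Y.hasFls ∧
  ¬ ∃ (U : ETreeB A) (V : ETree A),
      Z = U.substBox V ∧ U.hasBox ∧ U ≠ ETreeB.box ∧ ¬ U.hasTru ∧ ¬ U.hasFls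

/-- T-*-decomposition (SCL): a ctsd with `Z` of minimal depth. -/
def IsTsdS {A : Type} (X : ETree A) (Y : ETreeB A) (Z : ETree A) : Prop :=
  IsCtsdS X Y Z ∧ ∀ (Y' : ETreeB A) (Z' : ETree A), IsCtsdS X Y' Z' → Z.depth ≤ Z'.depth

/-- The translation `h : FTerm → STerm` from FEL-terms to SCL-terms. -/
def hTrans {A : Type} : FTerm A → STerm A
  | FTerm.tru => STerm.tru
  | FTerm.fls => STerm.fls
  | FTerm.atom a => STerm.atom a
  | FTerm.neg p => STerm.neg (hTrans p)
  | FTerm.and p q => STerm.and (STerm.or (hTrans p) (STerm.and (hTrans q) STerm.fls)) (hTrans q)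
  | FTerm.or p q => STerm.or (STerm.and (hTrans p) (STerm.or (hTrans q) STerm.tru)) (hTrans q)

namespace FelDetAux

/-- Embedding of box-free trees into `ETreeB`. -/
def emb {A : Type} : ETree A → ETreeB A
  | .tru => .tru
  | .fls => .fls
  | .node l a r => .node (emb l) a (emb r)

lemma emb_substBox {A : Type} (t Y : ETree A) : (emb t).substBox Y = t := by
  induction t with
  | tru => rfl
  | fls => rfl
  | node l a r ihl ihr => simp [emb, ETreeB.substBox, ihl, ihr]

lemma substTT_hasTru {A : Type} (t : ETree A) : (t.subst .tru .tru).hasTru := by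
  induction t with
  | tru => trivial
  | fls => trivial
  | node l a r ihl ihr => exact Or.inl ihl

lemma substFF_hasFls {A : Type} (t : ETree A) : (t.subst .fls .fls).hasFls := by
  induction t with
  | tru => trivial
  | fls => trivial
  | node l a r ihl ihr => exact Or.inl ihl

lemma subst_hasTru {A : Type} {t U : ETree A} (V : ETree A) (ht : t.hasTru)
    (hU : U.hasTru) : (t.subst U V).hasTru := by
  induction t with
  | tru => exact hU
  | fls => exact ht.elim
  | node l a r ihl ihr =>
    rcases ht with h | h
    · exact Or.inl (ihl h)
    · exact Or.inr (ihr h)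

lemma subst_hasFls {A : Type} {t V : ETree A} (U : ETree A) (ht : t.hasFls)
    (hV : V.hasFls) : (t.subst U V).hasFls := by
  induction t with
  | tru => exact ht.elim
  | fls => exact hV
  | node l a r ihl ihr =>
    rcases ht with h | h
    · exact Or.inl (ihl h)
    · exact Or.inr (ihr h)

lemma ftT_hasTru {A : Type} {p : FTerm A} (h : IsFT_T p) : (fe p).hasTru := by
  induction h with
  | tru => trivial
  | or a hp ih =>
    simp only [fe, ETree.subst, ETree.hasTru]
    exact Or.inl (substTT_hasTru _)

lemma ftL_hasTru {A : Type} {p : FTerm A} (h : IsFT_L p) : (fe p).hasTru := by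
  cases h with
  | pos a hp =>
    simp only [fe, ETree.subst, ETree.hasTru]
    exact Or.inl (ftT_hasTru hp)
  | neg a hp =>
    simp only [fe, ETree.subst, ETree.hasTru]
    exact Or.inr (ftT_hasTru hp)

lemma ftL_hasFls {A : Type} {p : FTerm A} (h : IsFT_L p) : (fe p).hasFls := by
  cases h with
  | pos a hp =>
    simp only [fe, ETree.subst, ETree.hasFls]
    exact Or.inr (substFF_hasFls _)
  | neg a hp =>
    simp only [fe, ETree.subst, ETree.hasFls]
    exact Or.inl (substFF_hasFls _)

lemma star_tf {A : Type} (P : FTerm A) (hP : IsFT_Star P) :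
    (fe P).hasTru ∧ (fe P).hasFls := by
  cases hP with
  | c hc =>
    cases hc with
    | ell hl => exact ⟨ftL_hasTru hl, ftL_hasFls hl⟩
    | @and p q hp hq =>
      obtain ⟨h1, h2⟩ := star_tf p hp
      obtain ⟨h3, h4⟩ := star_tf q (IsFT_Star.d hq)
      constructor
      · simp only [fe]; exact subst_hasTru _ h1 h3
      · simp only [fe]; exact subst_hasFls _ h2 (substFF_hasFls _)
  | d hd =>
    cases hd with
    | ell hl => exact ⟨ftL_hasTru hl, ftL_hasFls hl⟩
    | @or p q hp hq =>
      obtain ⟨h1, h2⟩ := star_tf p hp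
      obtain ⟨h3, h4⟩ := star_tf q (IsFT_Star.c hq)
      constructor
      · simp only [fe]; exact subst_hasTru _ h1 (substTT_hasTru _)
      · simp only [fe]; exact subst_hasFls _ h2 h4
termination_by sizeOf P

lemma ctx_tru {A : Type} (t : ETree A) {U : ETree A} (V Y : ETree A) (XU : ETreeB A)
    (ht : t.hasTru) (hU : U = XU.substBox Y) (hXU : XU.hasBox) :
    ∃ X : ETreeB A, t.subst U V = X.substBox Y ∧ X.hasBox := by
  induction t with
  | tru => exact ⟨XU, hU, hXU⟩
  | fls => exact ht.elim
  | node l a r ihl ihr =>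
    rcases ht with h | h
    · obtain ⟨X, hX, hb⟩ := ihl h
      exact ⟨.node X a (emb (r.subst U V)),
        by simp [ETree.subst, ETreeB.substBox, hX, emb_substBox], Or.inl hb⟩
    · obtain ⟨X, hX, hb⟩ := ihr h
      exact ⟨.node (emb (l.subst U V)) a X,
        by simp [ETree.subst, ETreeB.substBox, hX, emb_substBox], Or.inr hb⟩

lemma ctx_fls {A : Type} (t : ETree A) {V : ETree A} (U Y : ETree A) (XV : ETreeB A)
    (ht : t.hasFls) (hV : V = XV.substBox Y) (hXV : XV.hasBox) :
    ∃ X : ETreeB A, t.subst U V = X.substBox Y ∧ X.hasBox := by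
  induction t with
  | tru => exact ht.elim
  | fls => exact ⟨XV, hV, hXV⟩
  | node l a r ihl ihr =>
    rcases ht with h | h
    · obtain ⟨X, hX, hb⟩ := ihl h
      exact ⟨.node X a (emb (r.subst U V)),
        by simp [ETree.subst, ETreeB.substBox, hX, emb_substBox], Or.inl hb⟩
    · obtain ⟨X, hX, hb⟩ := ihr h
      exact ⟨.node (emb (l.subst U V)) a X,
        by simp [ETree.subst, ETreeB.substBox, hX, emb_substBox], Or.inr hb⟩

lemma main_aux {A : Type} (P : FTerm A) (hP : IsFT_Star P) :
    ∃ (X : ETreeB A) (Y : ETree A) (Q : FTerm A),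
      fe P = X.substBox Y ∧ X.hasBox ∧ IsFT_L Q ∧ Y = fe Q := by
  cases hP with
  | c hc =>
    cases hc with
    | ell hl => exact ⟨.box, fe _, _, rfl, trivial, hl, rfl⟩
    | @and p q hp hq =>
      obtain ⟨X, Y, Q, hEq, hb, hL, hYQ⟩ := main_aux q (IsFT_Star.d hq)
      obtain ⟨X', hX', hb'⟩ :=
        ctx_tru (fe p) ((fe q).subst .fls .fls) Y X (star_tf p hp).1 hEq hb
      exact ⟨X', Y, Q, by simpa only [fe] using hX', hb', hL, hYQ⟩
  | d hd =>
    cases hd with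
    | ell hl => exact ⟨.box, fe _, _, rfl, trivial, hl, rfl⟩
    | @or p q hp hq =>
      obtain ⟨X, Y, Q, hEq, hb, hL, hYQ⟩ := main_aux q (IsFT_Star.c hq)
      obtain ⟨X', hX', hb'⟩ :=
        ctx_fls (fe p) ((fe q).subst .tru .tru) Y X (star_tf p hp).2 hEq hb
      exact ⟨X', Y, Q, by simpa only [fe] using hX', hb', hL, hYQ⟩
termination_by sizeOf P

end FelDetAux

/-- determinativeness (FEL). -/
theorem fel_determinativeness (A : Type) [Countable A] (P : FTerm A)
    (hP : IsFT_Star P) :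
    ∃ (X : ETreeB A) (Y : ETree A) (Q : FTerm A),
      fe P = X.substBox Y ∧ X.hasBox ∧ IsFT_L Q ∧ Y = fe Q := by
  exact FelDetAux.main_aux P hP
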